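/- With c₁ > c₂ > 0, 0 < c₀ < 1, and total claim count n = ∑nₜ ≥ 0, define a₁ = Γ(1+n)c₀/c₁ⁿ, a₂ = Γ(1+n)(1-c₀)/c₂ⁿ, a₁* = Γ(1+n)c₀/c₁^(1+n), a₂* = Γ(1+n)(1-c₀)/c₂^(1+n). Then (a₁*/(a₁*+a₂*))·(1+n)/c₁ + (a₂*/(a₁*+a₂*))·(1+n)/c₂ ≥ (a₁/(a₁+a₂))·(1+n)/c₁ + (a₂/(a₁+a₂))·(1+n)/c₂, with strict inequality for n such that both sides are defined and c₁ ≠ c₂. -/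
import Mathlib


open Real

/-- The dependent-case Bayesian premium (eq. b2) dominates the
independent-case premium (eq. b1): with `c₁ > c₂ > 0`, `0 < c₀ < 1` and total
claim count `n`, the mixture with weights `a₁*, a₂*` (rates raised to the power
`1+n`) gives a larger weighted average of `(1+n)/c₁` and `(1+n)/c₂` than the
mixture with weights `a₁, a₂` (rates raised to the power `n`); the inequality is
strict since `c₁ ≠ c₂`. -/
theorem dependent_premium_ge
    (c₀ c₁ c₂ : ℝ) (hc : c₂ < c₁) (hc₂ : 0 < c₂) (hc₀ : 0 < c₀) (hc₀' : c₀ < 1)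
    (n : ℕ) (a₁ a₂ a₁s a₂s : ℝ)
    (ha₁ : a₁ = Gamma (1 + n) * c₀ / c₁ ^ n)
    (ha₂ : a₂ = Gamma (1 + n) * (1 - c₀) / c₂ ^ n)
    (ha₁s : a₁s = Gamma (1 + n) * c₀ / c₁ ^ (1 + n))
    (ha₂s : a₂s = Gamma (1 + n) * (1 - c₀) / c₂ ^ (1 + n)) :
    (a₁ / (a₁ + a₂)) * ((1 + n) / c₁) + (a₂ / (a₁ + a₂)) * ((1 + n) / c₂)
      ≤ (a₁s / (a₁s + a₂s)) * ((1 + n) / c₁) + (a₂s / (a₁s + a₂s)) * ((1 + n) / c₂) ∧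
    (c₁ ≠ c₂ →
      (a₁ / (a₁ + a₂)) * ((1 + n) / c₁) + (a₂ / (a₁ + a₂)) * ((1 + n) / c₂)
        < (a₁s / (a₁s + a₂s)) * ((1 + n) / c₁) + (a₂s / (a₁s + a₂s)) * ((1 + n) / c₂)) := by
  have hc1 : 0 < c₁ := hc₂.trans hc
  have hG : 0 < Gamma (1 + n) := Real.Gamma_pos_of_pos (by positivity)
  have hc₀'' : 0 < 1 - c₀ := by linarith
  have hp1 : (0:ℝ) < c₁ ^ n := pow_pos hc1 n
  have hp2 : (0:ℝ) < c₂ ^ n := pow_pos hc₂ n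
  have ha₁p : 0 < a₁ := by rw [ha₁]; positivity
  have ha₂p : 0 < a₂ := by rw [ha₂]; positivity
  have e1 : a₁s = a₁ / c₁ := by
    rw [ha₁s, ha₁, div_div, pow_add, pow_one, mul_comm (c₁^n) c₁]
  have e2 : a₂s = a₂ / c₂ := by
    rw [ha₂s, ha₂, div_div, pow_add, pow_one, mul_comm (c₂^n) c₂]
  have ha₁sp : 0 < a₁s := by rw [e1]; positivity
  have ha₂sp : 0 < a₂s := by rw [e2]; positivity
  have hS : 0 < a₁ + a₂ := by linarith
  have hSs : 0 < a₁s + a₂s := by linarith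
  have hn : (0:ℝ) < 1 + n := by positivity
  have hlt : (a₁ / (a₁ + a₂)) * ((1 + n) / c₁) + (a₂ / (a₁ + a₂)) * ((1 + n) / c₂)
      < (a₁s / (a₁s + a₂s)) * ((1 + n) / c₁) + (a₂s / (a₁s + a₂s)) * ((1 + n) / c₂) := by
    have hSs' : 0 < a₁ * c₂ + a₂ * c₁ := by positivity
    rw [e1, e2, ← sub_pos]
    have key : a₁ / c₁ / (a₁ / c₁ + a₂ / c₂) * ((1 + ↑n) / c₁) +
          a₂ / c₂ / (a₁ / c₁ + a₂ / c₂) * ((1 + ↑n) / c₂) -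
        (a₁ / (a₁ + a₂) * ((1 + ↑n) / c₁) + a₂ / (a₁ + a₂) * ((1 + ↑n) / c₂)) =
        (1 + ↑n) * a₁ * a₂ * (c₁ - c₂) ^ 2 /
          (c₁ * c₂ * (a₁ + a₂) * (a₁ * c₂ + a₂ * c₁)) := by
      rw [div_add_div _ _ (ne_of_gt hc1) (ne_of_gt hc₂)]
      field_simp
      ring
    rw [key]
    have hcc : 0 < c₁ - c₂ := by linarith
    positivity
  exact ⟨le_of_lt hlt, fun _ => hlt⟩
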